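/- arXiv:math/0510362 — 2 statements merged into one kernel-verified Lean document; each statement's English description precedes it below -/
import Mathlib

section
/- Let γ = (γ₁,…,γ_l) be a partition of n with ℓ(γ) = l parts. Then the coefficients ρ^γ_{j,k} defined by (1/(2y)) ∏_{i=1}^l ((x+y)^{γᵢ} − (x−y)^{γᵢ}) = Σ_{j+k=n−1} ρ^γ_{j,k} x^j y^k satisfy: ρ^γ_{j,k} = (2^{l−1} z_γ / Aut(γ)) · S_p(γ₁,…,γ_l) whenever (j,k) = (n−l−2p, l+2p−1) for some nonnegative integer p, and ρ^γ_{j,k} = 0 for all other pairs (j,k) with j+k = n−1. -/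
open Finset MvPolynomial

/-- `Aut(γ) = ∏ᵢ mᵢ!` where `mᵢ` is the number of parts of `γ` equal to `i`. -/
def autP {n : ℕ} (γ : Nat.Partition n) : ℕ :=
  ∏ i ∈ γ.parts.toFinset, (γ.parts.count i).factorial

/-- `z_γ = ∏ᵢ i^{mᵢ} mᵢ!`. -/
def zP {n : ℕ} (γ : Nat.Partition n) : ℕ :=
  γ.parts.prod * autP γ

/-- The symmetric quantity `S_p(x₁,…,x_l)`: `S₀ = 1` and for `p > 0`,
`S_p(x₁,…,x_l) = Σ_{p₁+⋯+p_l=p} ∏ᵢ (1/xᵢ)·C(xᵢ, 2pᵢ+1)`, here evaluated at the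
entries of the list `L` of positive integers. -/
def SP (L : List ℕ) (p : ℕ) : ℚ :=
  if p = 0 then 1
  else ∑ q ∈ Finset.Nat.antidiagonalTuple L.length p,
    ∏ i : Fin L.length, ((L.get i : ℚ))⁻¹ * (Nat.choose (L.get i) (2 * q i + 1) : ℚ)


lemma CXX (a : ℚ) (u v : ℕ) : (C a * X 0 ^ u * X 1 ^ v : MvPolynomial (Fin 2) ℚ)
    = monomial (Finsupp.single 0 u + Finsupp.single 1 v) a := by
  rw [X_pow_eq_monomial, X_pow_eq_monomial, C_apply, monomial_mul, monomial_mul,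
    zero_add, mul_one, mul_one]

lemma pairEq (a b u v : ℕ) :
    (Finsupp.single (0 : Fin 2) a + Finsupp.single 1 b
      = Finsupp.single 0 u + Finsupp.single 1 v) ↔ (a = u ∧ b = v) := by
  constructor
  · intro h
    have h0 := DFunLike.congr_fun h 0
    have h1 := DFunLike.congr_fun h 1
    simp [Finsupp.single_apply] at h0 h1
    exact ⟨h0, h1⟩
  · rintro ⟨rfl, rfl⟩; rfl

lemma prod_mono {ι : Type*} (s : Finset ι) (e : ι → (Fin 2 →₀ ℕ)) (a : ι → ℚ) :
    ∏ i ∈ s, (monomial (e i) (a i) : MvPolynomial (Fin 2) ℚ)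
      = monomial (∑ i ∈ s, e i) (∏ i ∈ s, a i) := by
  classical
  induction s using Finset.cons_induction with
  | empty => simp
  | cons i s hi ih => rw [Finset.prod_cons, Finset.sum_cons, Finset.prod_cons, ih, monomial_mul]

lemma sum_single_pair {m : ℕ} (u v : Fin m → ℕ) :
    ∑ i : Fin m, (Finsupp.single (0 : Fin 2) (u i) + Finsupp.single 1 (v i))
      = Finsupp.single 0 (∑ i, u i) + Finsupp.single 1 (∑ i, v i) := by
  rw [Finset.sum_add_distrib]
  congr 1
  · exact (map_sum (Finsupp.singleAddHom (0 : Fin 2)) u Finset.univ).symm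
  · exact (map_sum (Finsupp.singleAddHom (1 : Fin 2)) v Finset.univ).symm

lemma two_eq_C : (2 : MvPolynomial (Fin 2) ℚ) = C (2 : ℚ) := by
  rw [map_ofNat]

lemma twoX1_mul (a : ℚ) (u v : ℕ) :
    (2 * X 1 : MvPolynomial (Fin 2) ℚ) * (C a * X 0 ^ u * X 1 ^ v)
      = monomial (Finsupp.single 0 u + Finsupp.single 1 (v + 1)) (2 * a) := by
  rw [← CXX, two_eq_C, map_mul]
  ring

lemma twoX1_pow_mul (m : ℕ) (s : Fin 2 →₀ ℕ) (a : ℚ) :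
    (2 * X 1 : MvPolynomial (Fin 2) ℚ) ^ m * monomial s a
      = monomial (Finsupp.single 1 m + s) (2 ^ m * a) := by
  rw [mul_pow, two_eq_C, ← map_pow, X_pow_eq_monomial, C_apply, monomial_mul, monomial_mul,
    zero_add, mul_one]

noncomputable def g (p : ℕ) : MvPolynomial (Fin 2) ℚ :=
  ∑ q ∈ Finset.range ((p+1)/2),
    C ((p.choose (2*q+1) : ℚ)) * X 0 ^ (p - (2*q+1)) * X 1 ^ (2*q)

lemma factor_eq (p : ℕ) :
    ((X 0 + X 1) ^ p - (X 0 - X 1) ^ p : MvPolynomial (Fin 2) ℚ) = 2 * X 1 * g p := by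
  have h2 : (X 0 - X 1 : MvPolynomial (Fin 2) ℚ) ^ p
      = ∑ k ∈ range (p+1), X 0 ^ k * (-X 1) ^ (p - k) * (p.choose k : MvPolynomial (Fin 2) ℚ) := by
    rw [sub_eq_add_neg, add_pow]
  rw [add_pow, h2, ← Finset.sum_sub_distrib, g, Finset.mul_sum]
  rw [← Finset.sum_filter_of_ne (p := fun k => (p - k) % 2 = 1)]
  · refine Finset.sum_nbij' (fun k => (p - k)/2) (fun q => p - (2*q+1)) ?_ ?_ ?_ ?_ ?_
    · intro a ha
      simp only [Finset.mem_filter, Finset.mem_range] at ha ⊢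
      omega
    · intro q hq
      simp only [Finset.mem_filter, Finset.mem_range] at hq ⊢
      omega
    · intro a ha; simp only [Finset.mem_filter, Finset.mem_range] at ha; omega
    · intro q hq; simp only [Finset.mem_range] at hq; omega
    · intro k hk
      simp only [Finset.mem_filter, Finset.mem_range] at hk
      obtain ⟨hk1, hk2⟩ := hk
      have hodd : p - k = 2 * ((p-k)/2) + 1 := by omega
      set q := (p-k)/2 with hq
      have hle : 2*q+1 ≤ p := by omega
      have hk' : k = p - (2*q+1) := by omega
      have hch : p.choose k = p.choose (2*q+1) := by
        rw [hk', Nat.choose_symm hle]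
      rw [hodd, hch, ← hk']
      have hneg : ((-X 1 : MvPolynomial (Fin 2) ℚ)) ^ (2*q+1) = - (X 1 ^ (2*q+1)) := by
        rw [Odd.neg_pow ⟨q, by ring⟩]
      have hcast : ((p.choose (2*q+1) : ℕ) : MvPolynomial (Fin 2) ℚ)
          = C ((p.choose (2*q+1) : ℚ)) := by rfl
      rw [hneg, hcast, pow_succ]
      ring
  · intro k hk hne
    rcases Nat.even_or_odd (p - k) with he | ho
    · exfalso; apply hne
      rw [Even.neg_pow he]; ring
    · exact Nat.odd_iff.mp ho

lemma key_coeff (n : ℕ) (L : List ℕ) (hLsum : L.sum = n)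
    (ρ : ℕ → ℕ → ℚ)
    (hρ : ∏ i : Fin L.length,
        ((X 0 + X 1) ^ (L.get i) - (X 0 - X 1) ^ (L.get i) : MvPolynomial (Fin 2) ℚ)
        = 2 * X 1 * ∑ jk ∈ Finset.HasAntidiagonal.antidiagonal (n - 1),
            C (ρ jk.1 jk.2) * X 0 ^ jk.1 * X 1 ^ jk.2)
    (j k : ℕ) (hjk : j + k = n - 1) :
    (∑ q ∈ Fintype.piFinset (fun i : Fin L.length => Finset.range ((L.get i + 1)/2)),
       if (n - (L.length + 2 * ∑ i, q i) = j ∧ L.length + 2 * ∑ i, q i = k + 1)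
       then ((2:ℚ)^L.length * ∏ i : Fin L.length, ((L.get i).choose (2 * q i + 1) : ℚ)) else 0)
    = 2 * ρ j k := by
  classical
  -- rewrite the left side of hρ
  have hL : ∏ i : Fin L.length,
        ((X 0 + X 1) ^ (L.get i) - (X 0 - X 1) ^ (L.get i) : MvPolynomial (Fin 2) ℚ)
      = ∑ q ∈ Fintype.piFinset (fun i : Fin L.length => Finset.range ((L.get i + 1)/2)),
          monomial (Finsupp.single (0 : Fin 2) (n - (L.length + 2 * ∑ i, q i))
              + Finsupp.single 1 (L.length + 2 * ∑ i, q i))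
            ((2:ℚ)^L.length * ∏ i : Fin L.length, ((L.get i).choose (2 * q i + 1) : ℚ)) := by
    have e1 : ∏ i : Fin L.length, g (L.get i)
        = ∑ q ∈ Fintype.piFinset (fun i : Fin L.length => Finset.range ((L.get i + 1)/2)),
            ∏ i : Fin L.length,
              (C (((L.get i).choose (2 * q i + 1) : ℚ)) * X 0 ^ (L.get i - (2 * q i + 1))
                * X 1 ^ (2 * q i)) := by
      simp only [g]
      exact Finset.prod_univ_sum _ _
    calc ∏ i : Fin L.length,
        ((X 0 + X 1) ^ (L.get i) - (X 0 - X 1) ^ (L.get i) : MvPolynomial (Fin 2) ℚ)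
        = ∏ i : Fin L.length, (2 * X 1 * g (L.get i)) :=
          Finset.prod_congr rfl fun i _ => factor_eq _
      _ = (2 * X 1 : MvPolynomial (Fin 2) ℚ) ^ L.length * ∏ i : Fin L.length, g (L.get i) := by
          rw [Finset.prod_mul_distrib, Finset.prod_const, Finset.card_univ, Fintype.card_fin]
      _ = _ := by
          rw [e1, Finset.mul_sum]
          refine Finset.sum_congr rfl fun q hq => ?_
          have hb : ∀ i : Fin L.length, 2 * q i + 1 ≤ L.get i := by
            intro i
            have := Fintype.mem_piFinset.mp hq i
            simp only [Finset.mem_range] at this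
            omega
          have h1 : ∏ i : Fin L.length,
              (C (((L.get i).choose (2 * q i + 1) : ℚ)) * X 0 ^ (L.get i - (2 * q i + 1))
                * X 1 ^ (2 * q i))
              = monomial (Finsupp.single (0 : Fin 2) (∑ i, (L.get i - (2 * q i + 1)))
                  + Finsupp.single 1 (∑ i, 2 * q i))
                (∏ i : Fin L.length, ((L.get i).choose (2 * q i + 1) : ℚ)) := by
            rw [Finset.prod_congr rfl fun (i : Fin L.length) _ => CXX _ _ _, prod_mono,
              sum_single_pair]
          have h2 : ∑ i : Fin L.length, (L.get i - (2 * q i + 1))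
              = n - (L.length + 2 * ∑ i, q i) := by
            rw [Finset.sum_tsub_distrib Finset.univ (f := fun i : Fin L.length => L.get i)
              (g := fun i => 2 * q i + 1) (fun i _ => hb i)]
            have h3 : ∑ i : Fin L.length, (2 * q i + 1) = 2 * (∑ i, q i) + L.length := by
              rw [Finset.sum_add_distrib, ← Finset.mul_sum]
              simp
            have h4 : ∑ i : Fin L.length, L.get i = n := by
              rw [← hLsum, ← List.sum_ofFn]
              congr 1
              exact List.ofFn_get L
            omega
          have h5 : ∑ i : Fin L.length, 2 * q i = 2 * ∑ i, q i := by
            rw [← Finset.mul_sum]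
          rw [h1, h2, h5, twoX1_pow_mul]
          congr 1
          rw [← add_assoc, add_comm (Finsupp.single (1:Fin 2) L.length) (Finsupp.single 0 _),
            add_assoc, ← Finsupp.single_add]
  -- rewrite the right side of hρ
  have hR : (2 * X 1 : MvPolynomial (Fin 2) ℚ) * ∑ jk ∈ Finset.HasAntidiagonal.antidiagonal (n - 1),
        C (ρ jk.1 jk.2) * X 0 ^ jk.1 * X 1 ^ jk.2
      = ∑ jk ∈ Finset.HasAntidiagonal.antidiagonal (n - 1),
          monomial (Finsupp.single (0 : Fin 2) jk.1 + Finsupp.single 1 (jk.2 + 1))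
            (2 * ρ jk.1 jk.2) := by
    rw [Finset.mul_sum]
    exact Finset.sum_congr rfl fun jk _ => twoX1_mul _ _ _
  rw [hL, hR] at hρ
  have hco := congrArg (coeff (Finsupp.single (0 : Fin 2) j + Finsupp.single 1 (k + 1))) hρ
  rw [coeff_sum, coeff_sum] at hco
  simp only [coeff_monomial] at hco
  have hcoL : ∀ q : Fin L.length → ℕ,
      (if (Finsupp.single (0 : Fin 2) (n - (L.length + 2 * ∑ i, q i))
            + Finsupp.single 1 (L.length + 2 * ∑ i, q i)
          = Finsupp.single 0 j + Finsupp.single 1 (k + 1))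
        then ((2:ℚ)^L.length * ∏ i : Fin L.length, ((L.get i).choose (2 * q i + 1) : ℚ)) else 0)
      = (if (n - (L.length + 2 * ∑ i, q i) = j ∧ L.length + 2 * ∑ i, q i = k + 1)
        then ((2:ℚ)^L.length * ∏ i : Fin L.length, ((L.get i).choose (2 * q i + 1) : ℚ))
        else 0) := by
    intro q
    exact if_congr (pairEq _ _ _ _) rfl rfl
  have hcoR : ∑ jk ∈ Finset.HasAntidiagonal.antidiagonal (n - 1),
      (if (Finsupp.single (0 : Fin 2) jk.1 + Finsupp.single 1 (jk.2 + 1)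
          = Finsupp.single 0 j + Finsupp.single 1 (k + 1))
        then (2 * ρ jk.1 jk.2) else 0)
      = 2 * ρ j k := by
    have heq : ∀ jk ∈ Finset.HasAntidiagonal.antidiagonal (n - 1),
        (if (Finsupp.single (0 : Fin 2) jk.1 + Finsupp.single 1 (jk.2 + 1)
            = Finsupp.single 0 j + Finsupp.single 1 (k + 1))
          then (2 * ρ jk.1 jk.2) else 0)
        = (if jk = (j, k) then (2 * ρ jk.1 jk.2) else 0) := by
      intro jk _
      refine if_congr ?_ rfl rfl
      rw [pairEq]
      constructor
      · rintro ⟨h1, h2⟩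
        exact Prod.ext h1 (by omega)
      · rintro rfl; exact ⟨rfl, rfl⟩
    rw [Finset.sum_congr rfl heq, Finset.sum_ite_eq' (Finset.HasAntidiagonal.antidiagonal (n-1)) (j, k)
      (fun jk => 2 * ρ jk.1 jk.2), if_pos (Finset.HasAntidiagonal.mem_antidiagonal.mpr hjk)]
  calc (∑ q ∈ Fintype.piFinset (fun i : Fin L.length => Finset.range ((L.get i + 1)/2)),
       if (n - (L.length + 2 * ∑ i, q i) = j ∧ L.length + 2 * ∑ i, q i = k + 1)
       then ((2:ℚ)^L.length * ∏ i : Fin L.length, ((L.get i).choose (2 * q i + 1) : ℚ)) else 0)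
      = ∑ q ∈ Fintype.piFinset (fun i : Fin L.length => Finset.range ((L.get i + 1)/2)),
        (if (Finsupp.single (0 : Fin 2) (n - (L.length + 2 * ∑ i, q i))
            + Finsupp.single 1 (L.length + 2 * ∑ i, q i)
          = Finsupp.single 0 j + Finsupp.single 1 (k + 1))
        then ((2:ℚ)^L.length * ∏ i : Fin L.length, ((L.get i).choose (2 * q i + 1) : ℚ))
        else 0) := Finset.sum_congr rfl fun q _ => (hcoL q).symm
    _ = 2 * ρ j k := by rw [hco, hcoR]

/-- for a partition `γ` of `n` with `l` parts, the coefficients `ρ^γ_{j,k}`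
defined by `(1/(2y)) ∏ᵢ ((x+y)^{γᵢ} - (x-y)^{γᵢ}) = Σ_{j+k=n-1} ρ^γ_{j,k} x^j y^k`
equal `(2^{l-1} z_γ / Aut(γ)) · S_p(γ)` when `(j,k) = (n-l-2p, l+2p-1)`, and vanish
for all other pairs `(j,k)` with `j+k = n-1`. -/
theorem rho_eval (n : ℕ) (γ : Nat.Partition n) (l : ℕ) (hl : l = Multiset.card γ.parts)
    (ρ : ℕ → ℕ → ℚ)
    (hρ : (γ.parts.map fun p =>
        ((X 0 + X 1) ^ p - (X 0 - X 1) ^ p : MvPolynomial (Fin 2) ℚ)).prod =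
      2 * X 1 * ∑ jk ∈ Finset.HasAntidiagonal.antidiagonal (n - 1),
        C (ρ jk.1 jk.2) * X 0 ^ jk.1 * X 1 ^ jk.2) :
    (∀ p : ℕ, l + 2 * p ≤ n →
      ρ (n - (l + 2 * p)) (l + 2 * p - 1) =
        2 ^ (l - 1) * ((zP γ : ℚ) / (autP γ : ℚ)) * SP γ.parts.toList p) ∧
    (∀ j k : ℕ, j + k = n - 1 →
      (∀ p : ℕ, ¬ (l + 2 * p ≤ n ∧ j = n - (l + 2 * p) ∧ k = l + 2 * p - 1)) →
      ρ j k = 0) := by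
  classical
  by_cases hn : n = 0
  · -- degenerate case: hρ is contradictory
    exfalso
    subst hn
    have h0 : ∀ x ∈ γ.parts, x = 0 := Multiset.sum_eq_zero_iff.mp γ.parts_sum
    have hparts : γ.parts = 0 := by
      rw [Multiset.eq_zero_iff_forall_notMem]
      intro x hx
      exact absurd (h0 x hx) (γ.parts_pos hx).ne'
    rw [hparts] at hρ
    have hc := congrArg constantCoeff hρ
    simp [map_mul, constantCoeff_X] at hc
  -- main case
  set L := γ.parts.toList with hLdef
  have hl2 : l = L.length := by rw [hl, hLdef, Multiset.length_toList]
  subst hl2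
  have hLsum : L.sum = n := by rw [hLdef, Multiset.sum_toList, γ.parts_sum]
  have hmap : (γ.parts.map fun p =>
        ((X 0 + X 1) ^ p - (X 0 - X 1) ^ p : MvPolynomial (Fin 2) ℚ)).prod
      = ∏ i : Fin L.length,
        ((X 0 + X 1) ^ (L.get i) - (X 0 - X 1) ^ (L.get i) : MvPolynomial (Fin 2) ℚ) := by
    conv_lhs => rw [← Multiset.coe_toList γ.parts]
    rw [Multiset.map_coe, Multiset.prod_coe, ← hLdef]
    conv_lhs => rw [← List.ofFn_get L]
    rw [List.map_ofFn, List.prod_ofFn]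
    rfl
  rw [hmap] at hρ
  have hlpos : 0 < L.length := by
    rcases Nat.eq_zero_or_pos L.length with h | h
    · exfalso; apply hn
      rw [← hLsum, List.length_eq_zero_iff.mp h]; rfl
    · exact h
  have hbound : ∀ q ∈ Fintype.piFinset (fun i : Fin L.length => Finset.range ((L.get i + 1)/2)),
      L.length + 2 * ∑ i, q i ≤ n := by
    intro q hq
    have hb : ∀ i : Fin L.length, 2 * q i + 1 ≤ L.get i := by
      intro i
      have := Fintype.mem_piFinset.mp hq i
      simp only [Finset.mem_range] at this
      omega
    have h1 : ∑ i : Fin L.length, (2 * q i + 1) ≤ ∑ i : Fin L.length, L.get i :=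
      Finset.sum_le_sum fun i _ => hb i
    have h3 : ∑ i : Fin L.length, (2 * q i + 1) = 2 * (∑ i, q i) + L.length := by
      rw [Finset.sum_add_distrib, ← Finset.mul_sum]; simp
    have h4 : ∑ i : Fin L.length, L.get i = n := by
      rw [← hLsum, ← List.sum_ofFn]; congr 1; exact List.ofFn_get L
    omega
  constructor
  · -- part 1
    intro p hp
    have hjk : (n - (L.length + 2 * p)) + (L.length + 2 * p - 1) = n - 1 := by omega
    have hkey := key_coeff n L hLsum ρ hρ _ _ hjk
    have hcond : ∀ q ∈ Fintype.piFinset (fun i : Fin L.length => Finset.range ((L.get i + 1)/2)),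
        ((n - (L.length + 2 * ∑ i, q i) = n - (L.length + 2 * p)
          ∧ L.length + 2 * ∑ i, q i = (L.length + 2 * p - 1) + 1)
          ↔ (∑ i, q i = p)) := by
      intro q hq
      have hb := hbound q hq
      constructor
      · rintro ⟨h1, h2⟩; omega
      · rintro h; constructor <;> omega
    have hsub : (Fintype.piFinset (fun i : Fin L.length => Finset.range ((L.get i + 1)/2))).filter
          (fun q => ∑ i, q i = p) ⊆ Finset.Nat.antidiagonalTuple L.length p := by
      intro q hq
      rw [Finset.Nat.mem_antidiagonalTuple]
      exact (Finset.mem_filter.mp hq).2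
    have hzero : ∀ q ∈ Finset.Nat.antidiagonalTuple L.length p,
        q ∉ (Fintype.piFinset (fun i : Fin L.length => Finset.range ((L.get i + 1)/2))).filter
          (fun q => ∑ i, q i = p) →
        ((2:ℚ)^L.length * ∏ i : Fin L.length, ((L.get i).choose (2 * q i + 1) : ℚ)) = 0 := by
      intro q hq hnq
      have hsum : ∑ i, q i = p := Finset.Nat.mem_antidiagonalTuple.mp hq
      have hnp : q ∉ Fintype.piFinset (fun i : Fin L.length => Finset.range ((L.get i + 1)/2)) :=
        fun h => hnq (Finset.mem_filter.mpr ⟨h, hsum⟩)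
      rw [Fintype.mem_piFinset] at hnp
      push_neg at hnp
      obtain ⟨i, hi⟩ := hnp
      simp only [Finset.mem_range] at hi
      have hch : (L.get i).choose (2 * q i + 1) = 0 := Nat.choose_eq_zero_of_lt (by omega)
      apply mul_eq_zero_of_right
      exact Finset.prod_eq_zero (Finset.mem_univ i) (by rw [hch]; norm_num)
    have e : (∑ q ∈ Fintype.piFinset (fun i : Fin L.length => Finset.range ((L.get i + 1)/2)),
          if (n - (L.length + 2 * ∑ i, q i) = n - (L.length + 2 * p)
            ∧ L.length + 2 * ∑ i, q i = (L.length + 2 * p - 1) + 1)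
          then ((2:ℚ)^L.length * ∏ i : Fin L.length, ((L.get i).choose (2 * q i + 1) : ℚ))
          else 0)
        = (2:ℚ)^L.length * ∑ q ∈ Finset.Nat.antidiagonalTuple L.length p,
            ∏ i : Fin L.length, ((L.get i).choose (2 * q i + 1) : ℚ) := by
      rw [Finset.sum_congr rfl (fun q hq => if_congr (hcond q hq) rfl rfl), ← Finset.sum_filter,
        Finset.sum_subset hsub hzero, Finset.mul_sum]
    rw [e] at hkey
    -- now hkey : 2^L.length * T = 2 * ρ _ _
    set T := ∑ q ∈ Finset.Nat.antidiagonalTuple L.length p,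
        ∏ i : Fin L.length, ((L.get i).choose (2 * q i + 1) : ℚ) with hT
    have h2l : (2:ℚ)^(L.length) = 2 * 2^(L.length - 1) := by
      rw [← pow_succ']
      congr 1
      omega
    have hrho : ρ (n - (L.length + 2 * p)) (L.length + 2 * p - 1) = 2^(L.length - 1) * T := by
      rw [h2l, mul_assoc] at hkey
      exact (mul_left_cancel₀ two_ne_zero hkey).symm
    rw [hrho]
    -- compute the right-hand side
    have hpos : ∀ i : Fin L.length, 0 < L.get i := by
      intro i
      apply γ.parts_pos
      rw [← Multiset.mem_toList, ← hLdef]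
      exact List.get_mem L i
    have hauto : (autP γ : ℚ) ≠ 0 := by
      have : 0 < autP γ := Finset.prod_pos fun i _ => Nat.factorial_pos _
      exact_mod_cast this.ne'
    have hzdiv : (zP γ : ℚ) / (autP γ : ℚ) = (γ.parts.prod : ℚ) := by
      rw [zP]
      push_cast
      rw [mul_div_assoc, div_self hauto, mul_one]
    have hprodL : (γ.parts.prod : ℚ) = ∏ i : Fin L.length, (L.get i : ℚ) := by
      have h1 : γ.parts.prod = L.prod := by rw [hLdef, Multiset.prod_toList]
      have h2 : L.prod = ∏ i : Fin L.length, L.get i := by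
        conv_lhs => rw [← List.ofFn_get L]
        rw [List.prod_ofFn]
      rw [h1, h2]
      push_cast
      rfl
    rw [hzdiv, hprodL, mul_assoc]
    congr 1
    -- T = (∏ L i) * SP L p
    rw [SP]
    by_cases hp0 : p = 0
    · subst hp0
      rw [if_pos rfl, mul_one, hT, Finset.Nat.antidiagonalTuple_zero_right,
        Finset.sum_singleton]
      refine (Finset.prod_congr rfl fun i _ => ?_).symm
      show (L.get i : ℚ) = ((L.get i).choose (2 * (0 : Fin L.length → ℕ) i + 1) : ℚ)
      norm_num
    · rw [if_neg hp0, hT, Finset.mul_sum]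
      refine (Finset.sum_congr rfl fun q hq => ?_).symm
      rw [← Finset.prod_mul_distrib]
      refine Finset.prod_congr rfl fun i _ => ?_
      have hne : (L.get i : ℚ) ≠ 0 := by
        exact_mod_cast (hpos i).ne'
      rw [← mul_assoc, mul_inv_cancel₀ hne, one_mul]
  · -- part 2
    intro j k hjk hnot
    have hkey := key_coeff n L hLsum ρ hρ j k hjk
    have hz : (∑ q ∈ Fintype.piFinset (fun i : Fin L.length => Finset.range ((L.get i + 1)/2)),
        if (n - (L.length + 2 * ∑ i, q i) = j ∧ L.length + 2 * ∑ i, q i = k + 1)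
        then ((2:ℚ)^L.length * ∏ i : Fin L.length, ((L.get i).choose (2 * q i + 1) : ℚ))
        else 0) = 0 := by
      apply Finset.sum_eq_zero
      intro q hq
      rw [if_neg]
      rintro ⟨h1, h2⟩
      exact hnot (∑ i, q i) ⟨hbound q hq, h1.symm, by omega⟩
    rw [hz] at hkey
    linarith
end

section
/- Let s, t₁,…,t_m be nonnegative integers, write t = (t₁,…,t_m), and let f(x₁,…,x_m) be a homogeneous polynomial of total degree t₁+⋯+t_m − s with rational coefficients. Then t₁!⋯t_m! times the coefficient of the monomial x₁^{t₁}⋯x_m^{t_m} in (x₁+⋯+x_m)^s · f(x₁,…,x_m) equals s! · 𝔇(f)(t₁,…,t_m), where 𝔇(f)(t₁,…,t_m) denotes the evaluation at x = t of the polynomial obtained from f by the falling-factorial substitution 𝔇. -/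
open Finset MvPolynomial

/-- Evaluation of `𝔇(f)` at the point `t`, where `𝔇` is the linear operator sending the
monomial `x₁^{j₁}⋯x_m^{j_m}` to the product of falling factorials
`∏ᵢ xᵢ(xᵢ-1)⋯(xᵢ-jᵢ+1)`. -/
noncomputable def Deval {m : ℕ} (f : MvPolynomial (Fin m) ℚ) (t : Fin m → ℚ) : ℚ :=
  ∑ d ∈ f.support, f.coeff d * ∏ i, (descPochhammer ℚ (d i)).eval (t i)

lemma coeff_sum_X_pow {m : ℕ} (s : ℕ) (u : Fin m →₀ ℕ) :
    MvPolynomial.coeff u ((∑ i, X i : MvPolynomial (Fin m) ℚ) ^ s) =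
      if ∑ i, u i = s then (Nat.multinomial Finset.univ u : ℚ) else 0 := by
  classical
  rw [Finset.sum_pow_eq_sum_piAntidiag]
  rw [MvPolynomial.coeff_sum]
  have key : ∀ k : Fin m → ℕ,
      ((Nat.multinomial Finset.univ k : MvPolynomial (Fin m) ℚ) * ∏ i, X i ^ k i) =
        MvPolynomial.monomial (Finsupp.equivFunOnFinite.symm k)
          ((Nat.multinomial Finset.univ k : ℚ)) := by
    intro k
    have h1 : (∏ i, (X i : MvPolynomial (Fin m) ℚ) ^ k i) =
        MvPolynomial.monomial (Finsupp.equivFunOnFinite.symm k) 1 := by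
      rw [← MvPolynomial.prod_X_pow_eq_monomial]
      refine (Finset.prod_subset (Finset.subset_univ _) ?_).symm
      intro i _ hi
      have : (Finsupp.equivFunOnFinite.symm k) i = 0 := by
        simpa using Finsupp.notMem_support_iff.mp hi
      simp only [Finsupp.coe_equivFunOnFinite_symm] at this ⊢
      simp [this]
    rw [h1, ← MvPolynomial.C_eq_coe_nat, MvPolynomial.C_mul_monomial, mul_one]
  simp_rw [key, MvPolynomial.coeff_monomial]
  by_cases h : ∑ i, u i = s
  · rw [if_pos h, Finset.sum_eq_single (⇑u)]
    · have : Finsupp.equivFunOnFinite.symm ⇑u = u := by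
        ext i; simp
      rw [this, if_pos rfl]
    · intro k _ hk
      rw [if_neg]
      intro hc
      apply hk
      have := congrArg (⇑Finsupp.equivFunOnFinite) hc
      exact (by simpa using this : k = Finsupp.equivFunOnFinite u)
    · intro hu
      exfalso
      apply hu
      simp only [mem_piAntidiag]
      exact ⟨h, fun i _ => Finset.mem_univ i⟩
  · rw [if_neg h]
    refine Finset.sum_eq_zero fun k hk => ?_
    rw [if_neg]
    intro hc
    apply h
    rw [mem_piAntidiag] at hk
    have hke : k = ⇑u := by
      have := congrArg (⇑Finsupp.equivFunOnFinite) hc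
      exact (by simpa using this : k = Finsupp.equivFunOnFinite u)
    rw [← hk.1, hke]

lemma nat_key (m s : ℕ) (t d : Fin m → ℕ) (hle : ∀ i, d i ≤ t i)
    (hsum : ∑ i, (t i - d i) = s) :
    (∏ i, (t i).factorial) * Nat.multinomial Finset.univ (fun i => t i - d i) =
      s.factorial * ∏ i, (t i).descFactorial (d i) := by
  have h1 : ∀ i : Fin m, (t i).factorial = (t i - d i).factorial * (t i).descFactorial (d i) :=
    fun i => (Nat.factorial_mul_descFactorial (hle i)).symm
  calc (∏ i, (t i).factorial) * Nat.multinomial Finset.univ (fun i => t i - d i)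
      = ((∏ i, (t i - d i).factorial) * Nat.multinomial Finset.univ (fun i => t i - d i)) *
          ∏ i, (t i).descFactorial (d i) := by
        rw [Finset.prod_congr rfl fun i _ => h1 i, Finset.prod_mul_distrib]; ring
    _ = s.factorial * ∏ i, (t i).descFactorial (d i) := by
        rw [Nat.multinomial_spec, hsum]

/-- the extraction lemma: if `f` is homogeneous of total degree
`t₁+⋯+t_m - s`, then `t₁!⋯t_m!·[x₁^{t₁}⋯x_m^{t_m}] (x₁+⋯+x_m)^s f(x) = s!·𝔇(f)(t₁,…,t_m)`. -/
theorem extraction_lemma (m s : ℕ) (t : Fin m → ℕ) (hs : s ≤ ∑ i, t i)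
    (f : MvPolynomial (Fin m) ℚ) (hf : f.IsHomogeneous (∑ i, t i - s)) :
    (∏ i, ((t i).factorial : ℚ)) *
        MvPolynomial.coeff (Finsupp.equivFunOnFinite.symm t) ((∑ i, X i) ^ s * f) =
      (s.factorial : ℚ) * Deval f (fun i => (t i : ℚ)) := by
  classical
  set T : Fin m →₀ ℕ := Finsupp.equivFunOnFinite.symm t with hT
  have hTi : ∀ i, T i = t i := fun i => rfl
  conv_lhs => rw [f.as_sum, Finset.mul_sum, MvPolynomial.coeff_sum, Finset.mul_sum]
  rw [Deval, Finset.mul_sum]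
  refine Finset.sum_congr rfl fun d hd => ?_
  have hdeg : ∑ i, d i = ∑ i, t i - s := by
    have := hf (MvPolynomial.mem_support_iff.mp hd)
    rw [← this, Finsupp.weight_apply, Finsupp.sum_fintype]
    · simp
    · simp
  rw [MvPolynomial.coeff_mul_monomial']
  simp_rw [fun i => descPochhammer_eval_eq_descFactorial (R := ℚ) (t i) (d i)]
  by_cases hle : d ≤ T
  · have hle' : ∀ i, d i ≤ t i := fun i => hle i
    rw [if_pos hle]
    have hsub : ∀ i, (T - d) i = t i - d i := fun i => by
      rw [Finsupp.tsub_apply]; rfl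
    have hsum : ∑ i, (T - d) i = s := by
      simp_rw [hsub]
      have : ∑ i, (t i - d i) = ∑ i, t i - ∑ i, d i := by
        rw [eq_tsub_iff_add_eq_of_le (Finset.sum_le_sum fun i _ => hle' i),
          ← Finset.sum_add_distrib]
        exact Finset.sum_congr rfl fun i _ => Nat.sub_add_cancel (hle' i)
      rw [this, hdeg, Nat.sub_sub_self hs]
    rw [coeff_sum_X_pow, if_pos hsum]
    have hmult : Nat.multinomial Finset.univ ⇑(T - d) =
        Nat.multinomial Finset.univ fun i => t i - d i :=
      Nat.multinomial_congr fun i _ => hsub i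
    have := nat_key m s t d hle' (by simpa [hsub] using hsum)
    have hQ := congrArg (fun n : ℕ => (n : ℚ)) this
    push_cast at hQ
    rw [hmult]
    linear_combination (MvPolynomial.coeff d f) * hQ
  · rw [if_neg hle]
    obtain ⟨i, hi⟩ : ∃ i, ¬ d i ≤ t i := by
      by_contra h
      push_neg at h
      exact hle fun i => h i
    have h0 : (t i).descFactorial (d i) = 0 :=
      Nat.descFactorial_eq_zero_iff_lt.mpr (lt_of_not_ge hi)
    have hz : (∏ x, ((t x).descFactorial (d x) : ℚ)) = 0 :=
      Finset.prod_eq_zero (Finset.mem_univ i) (by simp [h0])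
    rw [hz]
    ring
end
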